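/- Regularised SVD (μ = 0): Let A be a real n×m matrix of rank r, k ≤ r, D ∈ ℝ^{d×n}, λ ≥ 0, L = DᵀD, and S(q) = λL − A q qᵀ Aᵀ for q ∈ ℝ^m. Then the constrained minimum of F(P,Q,B) = ‖A − PBQᵀ‖² + λ‖DP‖² over P ∈ ℝ^{n×k} with unit-norm columns, Q ∈ ℝ^{m×k} with QᵀQ = I_k, and diagonal B equals ‖A‖² + min{ Σ_{i=1}^k λ_min(S(q_i)) : Q = [q₁,…,q_k] ∈ ℝ^{m×k}, QᵀQ = I_k }. Given an optimal Q, an optimal P takes p_i to be a unit eigenvector of S(q_i) for its smallest eigenvalue, and the optimal B has β_i = (PᵀAQ)_{ii}. -/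
import Mathlib


open Matrix BigOperators

/-- Squared Frobenius norm of a real matrix. -/
noncomputable def frobSq {n m : ℕ} (X : Matrix (Fin n) (Fin m) ℝ) : ℝ :=
  ∑ i, ∑ j, (X i j) ^ 2

lemma frobSq_eq_trace {n m : ℕ} (X : Matrix (Fin n) (Fin m) ℝ) :
    frobSq X = Matrix.trace (X * Xᵀ) := by
  simp [frobSq, Matrix.trace, Matrix.diag, Matrix.mul_apply, sq]

lemma dot_quad {n k : ℕ} (P : Matrix (Fin n) (Fin k) ℝ)
    (N : Matrix (Fin n) (Fin n) ℝ) (i : Fin k) :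
    (fun a => P a i) ⬝ᵥ (N *ᵥ fun a => P a i) = (Pᵀ * N * P) i i := by
  simp only [dotProduct, Matrix.mulVec, Matrix.mul_apply, Matrix.transpose_apply,
    dotProduct, Finset.sum_mul, Finset.mul_sum]
  rw [Finset.sum_comm]
  exact Finset.sum_congr rfl fun a _ => Finset.sum_congr rfl fun b _ => by ring

lemma dot_col {n m k : ℕ} (P : Matrix (Fin n) (Fin k) ℝ)
    (A : Matrix (Fin n) (Fin m) ℝ) (Q : Matrix (Fin m) (Fin k) ℝ) (i : Fin k) :
    (fun a => P a i) ⬝ᵥ (A *ᵥ fun b => Q b i) = (Pᵀ * A * Q) i i := by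
  simp only [dotProduct, Matrix.mulVec, Matrix.mul_apply, Matrix.transpose_apply,
    dotProduct, Finset.sum_mul, Finset.mul_sum]
  rw [Finset.sum_comm]
  exact Finset.sum_congr rfl fun a _ => Finset.sum_congr rfl fun b _ => by ring

lemma key_expand {n m d k : ℕ} (A : Matrix (Fin n) (Fin m) ℝ)
    (D : Matrix (Fin d) (Fin n) ℝ) (lam : ℝ)
    (P : Matrix (Fin n) (Fin k) ℝ) (Q : Matrix (Fin m) (Fin k) ℝ) (β : Fin k → ℝ)
    (hP : ∀ i, ∑ a, P a i ^ 2 = 1) (hQ : Qᵀ * Q = 1) :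
    frobSq (A - P * Matrix.diagonal β * Qᵀ) + lam * frobSq (D * P)
      = frobSq A + ∑ i, ((β i - (Pᵀ * A * Q) i i) ^ 2
          + (fun a => P a i) ⬝ᵥ
            ((lam • (Dᵀ * D) - vecMulVec (A *ᵥ fun b => Q b i) (A *ᵥ fun b => Q b i))
              *ᵥ fun a => P a i)) := by
  set B := Matrix.diagonal β with hB
  set M := P * B * Qᵀ with hM
  have hPcol : ∀ i, (Pᵀ * P) i i = 1 := by
    intro i
    have := hP i
    simpa [Matrix.mul_apply, Matrix.transpose_apply, sq] using this
  have hexp : (A - M) * (A - M)ᵀ = A * Aᵀ - A * Mᵀ - M * Aᵀ + M * Mᵀ := by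
    rw [Matrix.transpose_sub, Matrix.sub_mul, Matrix.mul_sub, Matrix.mul_sub]
    abel
  have hMT : Mᵀ = Q * B * Pᵀ := by
    rw [hM, Matrix.transpose_mul, Matrix.transpose_mul, Matrix.transpose_transpose,
      Matrix.diagonal_transpose, Matrix.mul_assoc]
  have hMM : Matrix.trace (M * Mᵀ) = ∑ i, β i ^ 2 := by
    rw [hMT, hM]
    have h1 : P * B * Qᵀ * (Q * B * Pᵀ) = P * (B * B * Pᵀ) := by
      rw [show Q * B * Pᵀ = Q * (B * Pᵀ) from Matrix.mul_assoc _ _ _,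
        Matrix.mul_assoc (P * B) Qᵀ _, ← Matrix.mul_assoc Qᵀ Q _, hQ, Matrix.one_mul,
        Matrix.mul_assoc P B _, ← Matrix.mul_assoc B B _]
    rw [h1, Matrix.trace_mul_comm, Matrix.mul_assoc]
    have h2 : ∀ i : Fin k, (B * B * (Pᵀ * P)) i i = β i ^ 2 := by
      intro i
      rw [hB, Matrix.diagonal_mul_diagonal, Matrix.diagonal_mul, hPcol i]
      ring
    simp only [Matrix.trace, Matrix.diag]
    exact Finset.sum_congr rfl fun i _ => h2 i
  have hAM : Matrix.trace (A * Mᵀ) = ∑ i, β i * (Pᵀ * A * Q) i i := by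
    rw [hMT]
    rw [show A * (Q * B * Pᵀ) = (A * Q * B) * Pᵀ by
      rw [Matrix.mul_assoc, Matrix.mul_assoc, Matrix.mul_assoc]]
    rw [Matrix.trace_mul_comm, ← Matrix.mul_assoc, ← Matrix.mul_assoc]
    have h2 : ∀ i : Fin k, (Pᵀ * A * Q * B) i i = β i * (Pᵀ * A * Q) i i := by
      intro i
      rw [hB, Matrix.mul_diagonal]
      ring
    simp only [Matrix.trace, Matrix.diag]
    exact Finset.sum_congr rfl fun i _ => h2 i
  have hMA : Matrix.trace (M * Aᵀ) = ∑ i, β i * (Pᵀ * A * Q) i i := by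
    rw [← Matrix.trace_transpose, Matrix.transpose_mul, Matrix.transpose_transpose, hAM]
  have hDP : frobSq (D * P) = ∑ i, (Pᵀ * (Dᵀ * D) * P) i i := by
    rw [frobSq_eq_trace, Matrix.transpose_mul]
    rw [show D * P * (Pᵀ * Dᵀ) = D * (P * Pᵀ * Dᵀ) by
      rw [Matrix.mul_assoc, Matrix.mul_assoc]]
    rw [Matrix.trace_mul_comm]
    rw [show P * Pᵀ * Dᵀ * D = P * (Pᵀ * (Dᵀ * D)) by
      rw [Matrix.mul_assoc, Matrix.mul_assoc]]
    rw [Matrix.trace_mul_comm]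
    simp only [Matrix.trace, Matrix.diag, Matrix.mul_assoc]
  have hquad : ∀ i, (fun a => P a i) ⬝ᵥ
      ((lam • (Dᵀ * D) - vecMulVec (A *ᵥ fun b => Q b i) (A *ᵥ fun b => Q b i))
        *ᵥ fun a => P a i)
      = lam * (Pᵀ * (Dᵀ * D) * P) i i - ((Pᵀ * A * Q) i i) ^ 2 := by
    intro i
    rw [Matrix.sub_mulVec, dotProduct_sub]
    congr 1
    · rw [← dot_quad P (Dᵀ * D) i]
      rw [show (lam • (Dᵀ * D)) *ᵥ (fun a => P a i) = lam • ((Dᵀ * D) *ᵥ fun a => P a i) from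
        Matrix.smul_mulVec lam _ _]
      rw [dotProduct_smul]
      simp [smul_eq_mul]
    · rw [← dot_col P A Q i]
      set v := A *ᵥ (fun b => Q b i) with hv
      set p := (fun a => P a i) with hp
      have h3 : vecMulVec v v *ᵥ p = (v ⬝ᵥ p) • v := by
        ext a
        simp only [Matrix.vecMulVec_apply, Matrix.mulVec, dotProduct, Pi.smul_apply,
          smul_eq_mul, Finset.sum_mul]
        exact Finset.sum_congr rfl fun b _ => by ring
      rw [h3, dotProduct_smul, dotProduct_comm v p, smul_eq_mul, sq]
  rw [frobSq_eq_trace (A - M), hexp, Matrix.trace_add, Matrix.trace_sub, Matrix.trace_sub,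
    hMM, hAM, hMA, hDP, ← frobSq_eq_trace A]
  simp only [hquad]
  have hRHS : (∑ i, ((β i - (Pᵀ * A * Q) i i) ^ 2
        + (lam * (Pᵀ * (Dᵀ * D) * P) i i - ((Pᵀ * A * Q) i i) ^ 2)))
      = (∑ i, β i ^ 2) - 2 * (∑ i, β i * (Pᵀ * A * Q) i i)
        + lam * (∑ i, (Pᵀ * (Dᵀ * D) * P) i i) := by
    rw [Finset.mul_sum, Finset.mul_sum, ← Finset.sum_sub_distrib, ← Finset.sum_add_distrib]
    exact Finset.sum_congr rfl fun i _ => by ring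
  rw [hRHS]
  ring

/-- **Regularised SVD (`μ = 0`).** The constrained minimum of
`F(P,Q,B) = ‖A - PBQᵀ‖² + λ‖DP‖²` over `P` with unit-norm columns, `Q` with
`QᵀQ = Iₖ` and diagonal `B` equals
`‖A‖² + min { ∑ᵢ λ_min(S(qᵢ)) : QᵀQ = Iₖ }` where `S(q) = λL - Aqqᵀ Aᵀ`.
Given an optimal `Q`, an optimal `P` takes `pᵢ` a unit eigenvector of `S(qᵢ)`
for its smallest eigenvalue, and the optimal `B` has `βᵢ = (PᵀAQ)ᵢᵢ`. -/
theorem regularised_svd_mu_zero {n m d r k : ℕ}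
    (A : Matrix (Fin n) (Fin m) ℝ) (hrank : A.rank = r) (hkr : k ≤ r)
    (D : Matrix (Fin d) (Fin n) ℝ)
    (lam : ℝ) (hlam : 0 ≤ lam)
    (L : Matrix (Fin n) (Fin n) ℝ) (hL : L = Dᵀ * D)
    (S : (Fin m → ℝ) → Matrix (Fin n) (Fin n) ℝ)
    (hS : ∀ q, S q = lam • L - vecMulVec (A *ᵥ q) (A *ᵥ q))
    -- `lammin q` is the smallest eigenvalue of the symmetric matrix `S q`
    (lammin : (Fin m → ℝ) → ℝ)
    (hlammin_eig : ∀ q : Fin m → ℝ, ∃ wq : Fin n → ℝ,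
        (∑ a, wq a ^ 2 = 1) ∧ S q *ᵥ wq = lammin q • wq)
    (hlammin_min : ∀ (q : Fin m → ℝ) (p : Fin n → ℝ),
        (∑ a, p a ^ 2 = 1) → lammin q ≤ p ⬝ᵥ (S q *ᵥ p))
    -- `Qopt` minimises `Q ↦ ∑ᵢ λ_min(S(qᵢ))` over the Stiefel manifold
    (Qopt : Matrix (Fin m) (Fin k) ℝ) (hQopt : Qoptᵀ * Qopt = 1)
    (hQopt_min : ∀ Q' : Matrix (Fin m) (Fin k) ℝ, Q'ᵀ * Q' = 1 →
        ∑ i, lammin (fun a => Qopt a i) ≤ ∑ i, lammin (fun a => Q' a i))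
    -- eigenvector columns for the optimal `P` and optimal diagonal entries of `B`
    (w : Fin k → (Fin n → ℝ))
    (hw_unit : ∀ i, ∑ a, w i a ^ 2 = 1)
    (hw_eig : ∀ i, S (fun a => Qopt a i) *ᵥ w i = lammin (fun a => Qopt a i) • w i)
    (P₀ : Matrix (Fin n) (Fin k) ℝ) (hP₀ : P₀ = Matrix.of fun a i => w i a)
    (β₀ : Fin k → ℝ) (hβ₀ : ∀ i, β₀ i = (P₀ᵀ * A * Qopt) i i) :
    (∀ (P : Matrix (Fin n) (Fin k) ℝ) (Q : Matrix (Fin m) (Fin k) ℝ) (β : Fin k → ℝ),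
        (∀ i, ∑ a, P a i ^ 2 = 1) → Qᵀ * Q = 1 →
        frobSq A + ∑ i, lammin (fun a => Qopt a i) ≤
          frobSq (A - P * Matrix.diagonal β * Qᵀ) + lam * frobSq (D * P)) ∧
    (∀ i, ∑ a, P₀ a i ^ 2 = 1) ∧
    frobSq (A - P₀ * Matrix.diagonal β₀ * Qoptᵀ) + lam * frobSq (D * P₀) =
      frobSq A + ∑ i, lammin (fun a => Qopt a i) := by
  have hSform : ∀ (Q : Matrix (Fin m) (Fin k) ℝ) (i : Fin k),
      S (fun a => Q a i)
        = lam • (Dᵀ * D) - vecMulVec (A *ᵥ fun b => Q b i) (A *ᵥ fun b => Q b i) := by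
    intro Q i; rw [hS, hL]
  have hP₀unit : ∀ i, ∑ a, P₀ a i ^ 2 = 1 := by
    intro i; rw [hP₀]; exact hw_unit i
  refine ⟨?_, hP₀unit, ?_⟩
  · intro P Q β hP hQ
    rw [key_expand A D lam P Q β hP hQ]
    have h1 : ∀ i : Fin k, lammin (fun a => Q a i)
        ≤ (β i - (Pᵀ * A * Q) i i) ^ 2
          + (fun a => P a i) ⬝ᵥ
            ((lam • (Dᵀ * D) - vecMulVec (A *ᵥ fun b => Q b i) (A *ᵥ fun b => Q b i))
              *ᵥ fun a => P a i) := by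
      intro i
      have := hlammin_min (fun a => Q a i) (fun a => P a i) (hP i)
      rw [hSform Q i] at this
      nlinarith [sq_nonneg (β i - (Pᵀ * A * Q) i i)]
    have h2 : ∑ i, lammin (fun a => Qopt a i) ≤ ∑ i, lammin (fun a => Q a i) :=
      hQopt_min Q hQ
    have h3 : ∑ i, lammin (fun a => Q a i) ≤ _ := Finset.sum_le_sum fun i _ => h1 i
    linarith
  · rw [key_expand A D lam P₀ Qopt β₀ hP₀unit hQopt]
    congr 1
    apply Finset.sum_congr rfl
    intro i _
    have hcol : (fun a => P₀ a i) = w i := by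
      funext a; rw [hP₀]; rfl
    have hsq : β₀ i - (P₀ᵀ * A * Qopt) i i = 0 := by rw [hβ₀ i]; ring
    rw [hsq]
    have heig := hw_eig i
    rw [hSform Qopt i] at heig
    rw [hcol, heig, dotProduct_smul, smul_eq_mul]
    have : w i ⬝ᵥ w i = 1 := by
      have := hw_unit i
      simpa [dotProduct, sq] using this
    rw [this]
    ring
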